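/- (Parry) Let β > 1 be such that d_β(1) is not finite (i.e., ε_n ≠ 0 for infinitely many n). Then a sequence s ∈ {0,1,…,⌊β⌋}^ℕ belongs to the β-shift S_β — the closure in the product topology of the set {d_β(x) : x ∈ [0,1)} — if and only if σ^n(s) ≤ d_β(1) in the lexicographic order for all n ≥ 0. -/

import Mathlib

/-- The β-transformation `x ↦ βx mod 1`. -/
noncomputable def Tb (β x : ℝ) : ℝ := β * x - ⌊β * x⌋

/-- The β-expansion of `x` : `d_β(x) = (⌊β ⬝ T_β^i(x)⌋)_{i ≥ 0}`. -/
noncomputable def dB (β x : ℝ) (i : ℕ) : ℤ := ⌊β * (Tb β)^[i] x⌋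

/-- The β-expansion of 1. -/
noncomputable def dB1 (β : ℝ) : ℕ → ℤ := dB β 1

/-- Strict lexicographic order on infinite words. -/
def LexLt {A : Type*} [LT A] (x y : ℕ → A) : Prop :=
  ∃ m : ℕ, (∀ i, i < m → x i = y i) ∧ x m < y m

/-- Lexicographic order on infinite words. -/
def LexLe {A : Type*} [LT A] (x y : ℕ → A) : Prop := LexLt x y ∨ x = y

/-! ### Auxiliary lemmas -/

lemma Tb_nonneg (β x : ℝ) : 0 ≤ Tb β x := by
  have := Int.floor_le (β * x)
  simp only [Tb]; linarith

lemma Tb_lt_one (β x : ℝ) : Tb β x < 1 := by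
  have := Int.lt_floor_add_one (β * x)
  simp only [Tb]; linarith

lemma Tb_iter_nonneg (β x : ℝ) (hx : 0 ≤ x) : ∀ n, 0 ≤ (Tb β)^[n] x
  | 0 => hx
  | n + 1 => by rw [Function.iterate_succ_apply']; exact Tb_nonneg β _

lemma Tb_iter_le_one (β x : ℝ) (hx : x ≤ 1) : ∀ n, (Tb β)^[n] x ≤ 1
  | 0 => hx
  | n + 1 => by rw [Function.iterate_succ_apply']; exact (Tb_lt_one β _).le

lemma dB1_nonneg (β : ℝ) (hβ : 0 ≤ β) (k : ℕ) : 0 ≤ dB1 β k :=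
  Int.floor_nonneg.mpr (mul_nonneg hβ (Tb_iter_nonneg β 1 zero_le_one k))

lemma dB_shift (β x : ℝ) (n k : ℕ) : dB β x (k + n) = dB β ((Tb β)^[n] x) k := by
  simp only [dB, Function.iterate_add_apply]

lemma lex_total (a b : ℕ → ℤ) : LexLe a b ∨ LexLt b a := by
  classical
  by_cases h : a = b
  · exact Or.inl (Or.inr h)
  · have hne : ∃ k, a k ≠ b k := by
      by_contra hc; push_neg at hc; exact h (funext hc)
    set m := Nat.find hne with hm
    have hspec : a m ≠ b m := Nat.find_spec hne
    have hag : ∀ i, i < m → a i = b i := fun i hi => by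
      by_contra hc; exact Nat.find_min hne hi hc
    rcases lt_or_gt_of_ne hspec with hlt | hgt
    · exact Or.inl (Or.inl ⟨m, hag, hlt⟩)
    · exact Or.inr ⟨m, fun i hi => (hag i hi).symm, hgt⟩

lemma not_lexLt_of_lexLe {a b : ℕ → ℤ} (h : LexLe a b) : ¬ LexLt b a := by
  rintro ⟨m, hag, hlt⟩
  rcases h with ⟨k, hag', hlt'⟩ | rfl
  · rcases lt_trichotomy m k with h' | rfl | h'
    · have := hag' m h'; omega
    · omega
    · have := hag k h'; omega
  · omega

/-- Monotonicity of β-expansions. -/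
lemma dB_mono (β : ℝ) (hβ : 0 < β) {x y : ℝ} (hxy : x ≤ y) :
    ¬ LexLt (dB β y) (dB β x) := by
  rintro ⟨m, hag, hlt⟩
  have key : ∀ i, i ≤ m → (Tb β)^[i] x ≤ (Tb β)^[i] y := by
    intro i hi
    induction i with
    | zero => exact hxy
    | succ k ih =>
      have h1 := ih (le_of_lt (Nat.lt_of_succ_le hi))
      rw [Function.iterate_succ_apply', Function.iterate_succ_apply']
      have hfl : ⌊β * (Tb β)^[k] x⌋ = ⌊β * (Tb β)^[k] y⌋ := by
        have h2 := hag k (Nat.lt_of_succ_le hi)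
        simpa only [dB] using h2.symm
      have h3 : β * (Tb β)^[k] x ≤ β * (Tb β)^[k] y :=
        mul_le_mul_of_nonneg_left h1 hβ.le
      simp only [Tb]
      rw [hfl]
      linarith
  have h4 : dB β x m ≤ dB β y m :=
    Int.floor_mono (mul_le_mul_of_nonneg_left (key m le_rfl) hβ.le)
  omega

/-- Realization: a finitely supported, everywhere lexicographically-smaller-than-`d(1)`
sequence is the β-expansion of a point of `[0,1)`. -/
lemma realize (β : ℝ) (hβ : 1 < β) (t : ℕ → ℤ) (N : ℕ)
    (ht0 : ∀ i, 0 ≤ t i) (htN : ∀ i, N ≤ i → t i = 0)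
    (hlt : ∀ n, LexLt (fun k => t (k + n)) (dB1 β)) :
    ∃ x ∈ Set.Ico (0 : ℝ) 1, ∀ i, dB β x i = t i := by
  have hβ0 : 0 < β := by linarith
  set b : ℝ := β⁻¹ with hbdef
  have hb0 : 0 < b := inv_pos.mpr hβ0
  have hbβ : b * β = 1 := inv_mul_cancel₀ hβ0.ne'
  set v : ℕ → ℝ := fun n => ∑ i ∈ Finset.range (N + 1), (t (n + i) : ℝ) * b ^ (i + 1)
    with hvdef
  have hvzero : ∀ n, N ≤ n → v n = 0 := by
    intro n hn
    refine Finset.sum_eq_zero fun i _ => ?_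
    rw [htN (n + i) (by omega)]; simp
  have hv0 : ∀ n, 0 ≤ v n := fun n =>
    Finset.sum_nonneg fun i _ =>
      mul_nonneg (by exact_mod_cast ht0 _) (pow_pos hb0 _).le
  have hrec : ∀ n, β * v n = (t n : ℝ) + v (n + 1) := by
    intro n
    have h1 : β * v n = ∑ i ∈ Finset.range (N + 1), (t (n + i) : ℝ) * b ^ i := by
      rw [hvdef, Finset.mul_sum]
      refine Finset.sum_congr rfl fun i _ => ?_
      have : β * ((t (n + i) : ℝ) * (b ^ i * b)) = (t (n + i) : ℝ) * b ^ i * (b * β) := by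
        ring
      rw [pow_succ, this, hbβ, mul_one]
    rw [Finset.sum_range_succ'] at h1
    have h2 : v (n + 1) = ∑ i ∈ Finset.range N, (t (n + 1 + i) : ℝ) * b ^ (i + 1) := by
      rw [hvdef]
      simp only
      rw [Finset.sum_range_succ, htN (n + 1 + N) (by omega)]
      simp
    have h3 : ∑ i ∈ Finset.range N, (t (n + (i + 1)) : ℝ) * b ^ (i + 1)
        = ∑ i ∈ Finset.range N, (t (n + 1 + i) : ℝ) * b ^ (i + 1) :=
      Finset.sum_congr rfl fun i _ => by rw [show n + (i + 1) = n + 1 + i by omega]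
    rw [h1, h3, h2]
    rw [pow_zero, mul_one, Nat.add_zero, add_comm]
    simp
  have hvpart : ∀ n k,
      v n = (∑ i ∈ Finset.range k, (t (n + i) : ℝ) * b ^ (i + 1)) + b ^ k * v (n + k) := by
    intro n k
    induction k with
    | zero => simp
    | succ k ih =>
      have hv : v (n + k) = b * ((t (n + k) : ℝ) + v (n + k + 1)) := by
        calc v (n + k) = (b * β) * v (n + k) := by rw [hbβ, one_mul]
          _ = b * (β * v (n + k)) := by ring
          _ = b * ((t (n + k) : ℝ) + v (n + k + 1)) := by rw [hrec]
      rw [Finset.sum_range_succ, ih, hv, show n + (k + 1) = n + k + 1 from rfl]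
      ring
  set u : ℕ → ℝ := fun k => (Tb β)^[k] 1 with hudef
  have hu0 : ∀ k, 0 ≤ u k := fun k => Tb_iter_nonneg β 1 zero_le_one k
  have husucc : ∀ k, u (k + 1) = β * u k - (dB1 β k : ℝ) := by
    intro k
    rw [hudef]
    simp only
    rw [Function.iterate_succ_apply']
    rfl
  have hpart1 : ∀ k,
      (∑ i ∈ Finset.range k, (dB1 β i : ℝ) * b ^ (i + 1)) = 1 - b ^ k * u k := by
    intro k
    induction k with
    | zero => simp [hudef]
    | succ k ih =>
      rw [Finset.sum_range_succ, ih, husucc k]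
      have hb2 : b ^ (k + 1) * β = b ^ k := by
        rw [pow_succ, mul_assoc, hbβ, mul_one]
      linear_combination u k * hb2
  have hvlt : ∀ n, v n < 1 := by
    have key : ∀ d n, N - n ≤ d → v n < 1 := by
      intro d
      induction d with
      | zero =>
        intro n hn
        rw [hvzero n (by omega)]; norm_num
      | succ d ih =>
        intro n hn
        by_cases hNn : N ≤ n
        · rw [hvzero n hNn]; norm_num
        · obtain ⟨M, hag, hMlt⟩ := hlt n
          have hIH : v (n + (M + 1)) < 1 := ih (n + (M + 1)) (by omega)
          have hvp := hvpart n (M + 1)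
          rw [Finset.sum_range_succ] at hvp
          have hsum : ∑ i ∈ Finset.range M, (t (n + i) : ℝ) * b ^ (i + 1)
              = ∑ i ∈ Finset.range M, (dB1 β i : ℝ) * b ^ (i + 1) :=
            Finset.sum_congr rfl fun i hi => by
              have h := hag i (Finset.mem_range.mp hi)
              simp only at h
              rw [show n + i = i + n by omega, h]
          rw [hsum] at hvp
          have hp1 := hpart1 (M + 1)
          rw [Finset.sum_range_succ] at hp1
          have hMlt' : t (n + M) < dB1 β M := by
            rw [show n + M = M + n by omega]; exact hMlt
          have hstep : (t (n + M) : ℝ) ≤ (dB1 β M : ℝ) - 1 := by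
            have : t (n + M) ≤ dB1 β M - 1 := by omega
            exact_mod_cast this
          have hbM : (0 : ℝ) < b ^ (M + 1) := pow_pos hb0 _
          have huM := hu0 (M + 1)
          have hint1 : b ^ (M + 1) * (t (n + M) : ℝ) ≤ b ^ (M + 1) * ((dB1 β M : ℝ) - 1) :=
            mul_le_mul_of_nonneg_left hstep hbM.le
          have hint2 : b ^ (M + 1) * v (n + (M + 1)) < b ^ (M + 1) * 1 :=
            mul_lt_mul_of_pos_left hIH hbM
          have hint3 : 0 ≤ b ^ (M + 1) * u (M + 1) := mul_nonneg hbM.le huM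
          linarith
    intro n; exact key (N - n) n le_rfl
  have hfloor : ∀ n, ⌊β * v n⌋ = t n := by
    intro n
    rw [hrec n]
    have h1 : ⌊(t n : ℝ) + v (n + 1)⌋ = t n + ⌊v (n + 1)⌋ := Int.floor_intCast_add _ _
    have h2 : ⌊v (n + 1)⌋ = 0 := Int.floor_eq_zero_iff.mpr ⟨hv0 _, hvlt _⟩
    omega
  have hTv : ∀ n, Tb β (v n) = v (n + 1) := by
    intro n
    show β * v n - (⌊β * v n⌋ : ℝ) = v (n + 1)
    rw [hfloor n, hrec n]; ring
  have hit : ∀ n, (Tb β)^[n] (v 0) = v n := by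
    intro n
    induction n with
    | zero => rfl
    | succ k ih => rw [Function.iterate_succ_apply', ih, hTv]
  refine ⟨v 0, ⟨hv0 0, hvlt 0⟩, fun i => ?_⟩
  show ⌊β * (Tb β)^[i] (v 0)⌋ = t i
  rw [hit i]; exact hfloor i

theorem stmt17 (β : ℝ) (hβ : 1 < β)
    (hinf : {n : ℕ | dB1 β n ≠ 0}.Infinite)
    (s : ℕ → ℤ) (hs : ∀ n, 0 ≤ s n ∧ s n ≤ ⌊β⌋) :
    s ∈ closure {t : ℕ → ℤ | ∃ x ∈ Set.Ico (0 : ℝ) 1, t = dB β x} ↔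
      ∀ n : ℕ, LexLe (fun k => s (k + n)) (dB1 β) := by
  have hβ0 : (0 : ℝ) < β := by linarith
  constructor
  · intro hcl n
    rcases lex_total (fun k => s (k + n)) (dB1 β) with h | h
    · exact h
    exfalso
    obtain ⟨m, hag, hmlt⟩ := h
    set U : Set (ℕ → ℤ) := {u | ∀ i, i < n + m + 1 → u i = s i} with hUdef
    have hUopen : IsOpen U := by
      have : U = ⋂ i ∈ Finset.range (n + m + 1), (fun u : ℕ → ℤ => u i) ⁻¹' {s i} := by
        ext u; simp [hUdef, Finset.mem_range]
      rw [this]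
      exact isOpen_biInter_finset fun i _ =>
        (continuous_apply i).isOpen_preimage _ (isOpen_discrete _)
    have hsU : s ∈ U := fun i _ => rfl
    obtain ⟨w, hwU, hwD⟩ := mem_closure_iff.mp hcl U hUopen hsU
    obtain ⟨x, hxI, rfl⟩ := hwD
    have hx1 : (Tb β)^[n] x ≤ 1 := Tb_iter_le_one β x hxI.2.le n
    apply dB_mono β hβ0 hx1
    refine ⟨m, ?_, ?_⟩
    · intro i hi
      have h1 : dB β ((Tb β)^[n] x) i = dB β x (i + n) := (dB_shift β x n i).symm
      have h2 : dB β x (i + n) = s (i + n) := hwU (i + n) (by omega)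
      calc dB β 1 i = dB1 β i := rfl
        _ = s (i + n) := hag i hi
        _ = dB β ((Tb β)^[n] x) i := by rw [h1, h2]
    · have h1 : dB β ((Tb β)^[n] x) m = dB β x (m + n) := (dB_shift β x n m).symm
      have h2 : dB β x (m + n) = s (m + n) := hwU (m + n) (by omega)
      show dB1 β m < dB β ((Tb β)^[n] x) m
      rw [h1, h2]; exact hmlt
  · intro hS
    have H : ∀ N : ℕ, ∃ x ∈ Set.Ico (0 : ℝ) 1, ∀ i, i < N → dB β x i = s i := by
      intro N
      classical
      set t : ℕ → ℤ := fun k => if k < N then s k else 0 with htdef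
      have ht0 : ∀ i, 0 ≤ t i := by
        intro i; simp only [htdef]; split
        · exact (hs i).1
        · exact le_rfl
      have htN : ∀ i, N ≤ i → t i = 0 := by
        intro i hi; simp [htdef, Nat.not_lt.mpr hi]
      have hε0 : ∀ k, 0 ≤ dB1 β k := dB1_nonneg β hβ0.le
      have hlt : ∀ n, LexLt (fun k => t (k + n)) (dB1 β) := by
        intro n
        by_cases hall : ∀ i, t (i + n) = dB1 β i
        · exfalso
          apply hinf
          apply Set.Finite.subset (Set.finite_Iio N)
          intro j hj
          simp only [Set.mem_setOf_eq] at hj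
          by_contra hjN
          simp only [Set.mem_Iio, not_lt] at hjN
          apply hj
          rw [← hall j]
          exact htN _ (by omega)
        · push_neg at hall
          set M := Nat.find hall with hM
          have hne : t (M + n) ≠ dB1 β M := Nat.find_spec hall
          have hagM : ∀ i, i < M → t (i + n) = dB1 β i := fun i hi => by
            by_contra hc; exact Nat.find_min hall hi hc
          refine ⟨M, hagM, ?_⟩
          by_cases hMN : N ≤ M + n
          · have h1 : t (M + n) = 0 := htN _ hMN
            have h2 := hε0 M
            simp only
            omega
          · push_neg at hMN
            have hts : t (M + n) = s (M + n) := by simp [htdef, hMN]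
            rcases hS n with ⟨m, hag', hlt'⟩ | heq
            · rcases lt_trichotomy m M with h' | rfl | h'
              · exfalso
                have h1 := hagM m h'
                have h2 : t (m + n) = s (m + n) := by
                  simp [htdef, show m + n < N by omega]
                have h3 := hlt' -- s (m + n) < dB1 β m
                simp only at h1 h3
                omega
              · simp only
                rw [hts]; exact hlt'
              · exfalso
                have h1 := hag' M h'
                simp only at h1
                omega
            · exfalso
              have h1 := congrFun heq M
              omega
      obtain ⟨x, hx, hdx⟩ := realize β hβ t N ht0 htN hlt
      exact ⟨x, hx, fun i hi => by rw [hdx i]; simp [htdef, hi]⟩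
    choose x hx hdx using H
    refine mem_closure_of_tendsto (b := Filter.atTop) (f := fun N => dB β (x N))
      (tendsto_pi_nhds.mpr fun i => ?_)
      (Filter.Eventually.of_forall fun N => ⟨x N, hx N, rfl⟩)
    have hev : ∀ᶠ N in Filter.atTop, dB β (x N) i = s i :=
      Filter.eventually_atTop.mpr ⟨i + 1, fun N hN => hdx N i (by omega)⟩
    exact Filter.Tendsto.congr' (hev.mono fun N h => h.symm) tendsto_const_nhds
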